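/- Let P > 0 and a > b1 > b2 ≥ 0, and set C1 := Cs(P,a,b1) and C2 := Cs(P,a,b2), where Cs(P,a,b) := [ (1/2)log(1+aP) − (1/2)log(1+bP) ]^+. Then 0 < C1 < C2, and the corner point (C1, C2 − C1) lies strictly outside the triangle with vertices (0,0), (C1,0), and (0,C2) (the rate region achievable by separately encoding the two messages with two Gaussian wiretap codes and time sharing); equivalently, C1/C1 + (C2 − C1)/C2 > 1. -/
import Mathlib


noncomputable section

/-- The secrecy capacity `Cs(P,a,b)` of the scalar Gaussian wiretap channel. -/
def Cs (P a b : ℝ) : ℝ :=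
  max 0 ((1 / 2) * Real.logb 2 (1 + a * P) - (1 / 2) * Real.logb 2 (1 + b * P))

/-- for `P > 0` and `a > b₁ > b₂ ≥ 0`, with `C₁ = Cs(P,a,b₁)` and
`C₂ = Cs(P,a,b₂)`, we have `0 < C₁ < C₂` and the corner point `(C₁, C₂ − C₁)` lies
strictly outside the triangle with vertices `(0,0)`, `(C₁,0)`, `(0,C₂)` achieved by
separate encoding and time sharing; equivalently `C₁/C₁ + (C₂ − C₁)/C₂ > 1`. -/
theorem stmt17_corner_point_beats_separate_encoding (P a b₁ b₂ : ℝ)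
    (hP : 0 < P) (hb₂ : 0 ≤ b₂) (h₂₁ : b₂ < b₁) (h₁a : b₁ < a) :
    0 < Cs P a b₁ ∧ Cs P a b₁ < Cs P a b₂ ∧
    (Cs P a b₁, Cs P a b₂ - Cs P a b₁) ∉
      convexHull ℝ ({(0, 0), (Cs P a b₁, 0), (0, Cs P a b₂)} : Set (ℝ × ℝ)) ∧
    Cs P a b₁ / Cs P a b₁ + (Cs P a b₂ - Cs P a b₁) / Cs P a b₂ > 1 := by
  have hb₁ : (0:ℝ) ≤ b₁ := le_of_lt (lt_of_le_of_lt hb₂ h₂₁)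
  have hpos₂ : (0:ℝ) < 1 + b₂ * P := by nlinarith
  have hpos₁ : (0:ℝ) < 1 + b₁ * P := by nlinarith
  have hposa : (0:ℝ) < 1 + a * P := by nlinarith
  have hlt₁ : 1 + b₁ * P < 1 + a * P := by nlinarith
  have hlt₂ : 1 + b₂ * P < 1 + b₁ * P := by nlinarith
  have hlog₁ : Real.logb 2 (1 + b₁ * P) < Real.logb 2 (1 + a * P) :=
    Real.logb_lt_logb one_lt_two hpos₁ hlt₁
  have hlog₂ : Real.logb 2 (1 + b₂ * P) < Real.logb 2 (1 + b₁ * P) :=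
    Real.logb_lt_logb one_lt_two hpos₂ hlt₂
  have hC1 : Cs P a b₁ =
      (1 / 2) * Real.logb 2 (1 + a * P) - (1 / 2) * Real.logb 2 (1 + b₁ * P) := by
    unfold Cs; rw [max_eq_right]; linarith
  have hC2 : Cs P a b₂ =
      (1 / 2) * Real.logb 2 (1 + a * P) - (1 / 2) * Real.logb 2 (1 + b₂ * P) := by
    unfold Cs; rw [max_eq_right]; linarith
  have hC1pos : 0 < Cs P a b₁ := by rw [hC1]; linarith
  have hC1lt : Cs P a b₁ < Cs P a b₂ := by rw [hC1, hC2]; linarith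
  have hC2pos : 0 < Cs P a b₂ := lt_trans hC1pos hC1lt
  set C₁ := Cs P a b₁
  set C₂ := Cs P a b₂
  have hsum : C₁ / C₁ + (C₂ - C₁) / C₂ > 1 := by
    rw [div_self (ne_of_gt hC1pos)]
    have : 0 < (C₂ - C₁) / C₂ := div_pos (by linarith) hC2pos
    linarith
  refine ⟨hC1pos, hC1lt, ?_, hsum⟩
  intro hmem
  have hlin : IsLinearMap ℝ (fun p : ℝ × ℝ => p.1 / C₁ + p.2 / C₂) := by
    constructor
    · intro x y; simp [add_div]; ring
    · intro c x; simp [Prod.smul_fst, Prod.smul_snd, smul_eq_mul]; ring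
  have hconv : Convex ℝ {p : ℝ × ℝ | p.1 / C₁ + p.2 / C₂ ≤ 1} :=
    convex_halfSpace_le hlin 1
  have hsub : ({(0, 0), (C₁, 0), (0, C₂)} : Set (ℝ × ℝ)) ⊆
      {p : ℝ × ℝ | p.1 / C₁ + p.2 / C₂ ≤ 1} := by
    intro p hp
    rcases hp with rfl | rfl | rfl
    · simp
    · simp [div_self (ne_of_gt hC1pos)]
    · simp [div_self (ne_of_gt hC2pos)]
  have := convexHull_min hsub hconv hmem
  simp only [Set.mem_setOf_eq] at this
  linarith
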